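/- arXiv:1512.01500 — 4 statements merged into one kernel-verified Lean document; each statement's English description precedes it below -/
import Mathlib

section
/- Let G be a countable discrete group with a sofic approximation Σ. Let (X_i, d_{X_i}), i ≥ 1, be compact metric spaces of diameter ≤ 1, let λ be a shift-invariant Borel probability measure on (∏_{i≥1} X_i)^G ≅ ∏_{i≥1} X_i^G which is a joining of G-processes (X_i^G, μ_i, S) (i.e., its marginal on each X_i^G is μ_i), and for each k let λ_k be the image of λ under the coordinate projection onto (∏_{i=1}^k X_i)^G. Equip ∏_{i=1}^k X_i with the metric d_k((x_i), (x'_i)) = Σ_{i=1}^k 2^{-i} d_{X_i}(x_i, x'_i) and ∏_{i≥1} X_i with d((x_i), (x'_i)) = Σ_{i≥1} 2^{-i} d_{X_i}(x_i, x'_i). If for every k the metric G-process ((∏_{i=1}^k X_i)^G, λ_k, S, d_k) has connected model spaces rel Σ, then ((∏_{i≥1} X_i)^G, λ, S, d) has connected model spaces rel Σ. -/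
/-!
Given models `x i`, `y i` whose empirical distributions tend to `λ`, the hypothesis at level `k`
joins their projections to the first `k` coordinates by good paths. Such a path lifts to the full
product by keeping the coordinates `≥ k` of `x i`, followed by a single jump to `y i` of weighted
Hamming length at most `2⁻ᵏ`. Letting the level `k = K i` grow slowly enough with `i`, the step
sizes tend to `0` and every finite-dimensional marginal of the lifted paths converges to the
corresponding marginal of `λ`, uniformly along the paths. On a compact product, convergence of all
finite-dimensional marginals implies weak* convergence, because every bounded continuous function
is uniformly approximated by one that depends on finitely many coordinates.
-/

open MeasureTheory Filter Topology
open scoped ENNReal NNReal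

section Defs

variable {G : Type*} [Group G]

/-- The right-shift action of `G` on `G → X`. -/
def shift {X : Type*} (g : G) (x : G → X) : G → X := fun h => x (h * g)

/-- The process map `φ^G` associated to `φ : X^G → Y`. -/
def procMap {X Y : Type*} (φ : (G → X) → Y) (x : G → X) : G → Y := fun g => φ (shift g x)

/-- Shift-invariance of a measure on `X^G`. -/
def ShiftInvariant {X : Type*} [MeasurableSpace X] (μ : Measure (G → X)) : Prop :=
  ∀ g : G, μ.map (shift g) = μ

/-- The pullback name of `x : V → X` at `v ∈ V`. -/
def pullbackName {V X : Type*} (σ : G → Equiv.Perm V) (v : V) (x : V → X) : G → X :=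
  fun g => x (σ g v)

lemma measurable_shift {X : Type*} [MeasurableSpace X] (g : G) :
    Measurable (shift (X := X) g) :=
  measurable_pi_lambda _ fun h => measurable_pi_apply (h * g)

/-- The empirical distribution of a model `x : V → X` along `σ : G → Sym(V)`. -/
noncomputable def empDist {V X : Type*} [Fintype V] [Nonempty V] [MeasurableSpace X]
    (σ : G → Equiv.Perm V) (x : V → X) : ProbabilityMeasure (G → X) :=
  ⟨(Fintype.card V : ℝ≥0∞)⁻¹ • ∑ v : V, Measure.dirac (pullbackName σ v x), by
    constructor
    simp only [Measure.smul_apply, Measure.coe_finset_sum, Finset.sum_apply,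
      Measure.dirac_apply_of_mem (Set.mem_univ _), Finset.sum_const, Finset.card_univ,
      nsmul_eq_mul, mul_one, smul_eq_mul]
    exact ENNReal.inv_mul_cancel (by exact_mod_cast Fintype.card_ne_zero)
      (by simp)⟩

/-- A sofic approximation to `G`. -/
def IsSoficApprox (V : ℕ → Type*) (σ : ∀ n, G → Equiv.Perm (V n)) : Prop :=
  (∀ g h : G, Tendsto
      (fun n => (Nat.card {v : V n // σ n g (σ n h v) = σ n (g * h) v} : ℝ) / (Nat.card (V n) : ℝ))
      atTop (𝓝 1)) ∧
  ∀ g : G, g ≠ 1 → Tendsto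
      (fun n => (Nat.card {v : V n // σ n g v ≠ v} : ℝ) / (Nat.card (V n) : ℝ))
      atTop (𝓝 1)

/-- Normalized Hamming average of `dX` over `V`. -/
noncomputable def hamming {V X : Type*} [Fintype V] (dX : X → X → ℝ) (x y : V → X) : ℝ :=
  (∑ v : V, dX (x v) (y v)) / (Fintype.card V : ℝ)

/-- The property of having connected model spaces relative to the sofic approximation `σ`. -/
def ConnectedModelSpaces [Countable G] (V : ℕ → Type*) [∀ n, Fintype (V n)] [∀ n, Nonempty (V n)]
    (σ : ∀ n, G → Equiv.Perm (V n))
    (X : Type*) [TopologicalSpace X] [MeasurableSpace X] [OpensMeasurableSpace X]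
    [SecondCountableTopology X]
    (dX : X → X → ℝ) (μ : ProbabilityMeasure (G → X)) : Prop :=
  ∀ n : ℕ → ℕ, StrictMono n → ∀ x y : (i : ℕ) → V (n i) → X,
    Tendsto (fun i => empDist (σ (n i)) (x i)) atTop (𝓝 μ) →
    Tendsto (fun i => empDist (σ (n i)) (y i)) atTop (𝓝 μ) →
    ∃ (δ : ℕ → ℝ) (ℓ : ℕ → ℕ) (p : (i : ℕ) → ℕ → V (n i) → X),
      Antitone δ ∧ (∀ i, 0 < δ i) ∧ Tendsto δ atTop (𝓝 0) ∧
      (∀ i, p i 0 = x i) ∧ (∀ i, p i (ℓ i) = y i) ∧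
      (∀ i j, j < ℓ i → hamming dX (p i j) (p i (j + 1)) < δ i) ∧
      ∀ O ∈ 𝓝 μ, ∀ᶠ i in atTop, ∀ j ≤ ℓ i, empDist (σ (n i)) (p i j) ∈ O

/-- The graph map `x ↦ (x, Φ(x))`, viewed as a map into `(X × Y)^G`. -/
def graphMap {X Y : Type*} (φ : (G → X) → Y) (x : G → X) : G → X × Y :=
  fun g => (x g, φ (shift g x))

lemma measurable_graphMap {X Y : Type*} [MeasurableSpace X] [MeasurableSpace Y]
    {φ : (G → X) → Y} (hφ : Measurable φ) : Measurable (graphMap (G := G) φ) :=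
  measurable_pi_lambda _ fun g => (measurable_pi_apply g).prodMk (hφ.comp (measurable_shift g))

lemma measurable_procMap {X Y : Type*} [MeasurableSpace X] [MeasurableSpace Y]
    {φ : (G → X) → Y} (hφ : Measurable φ) : Measurable (procMap (G := G) φ) :=
  measurable_pi_lambda _ fun g => hφ.comp (measurable_shift g)

/-- The graphical joining of `μ` and its pushforward under the factor map generated by `φ`. -/
noncomputable def graphJoin {X Y : Type*} [MeasurableSpace X] [MeasurableSpace Y]
    {φ : (G → X) → Y} (hφ : Measurable φ) (μ : ProbabilityMeasure (G → X)) :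
    ProbabilityMeasure (G → X × Y) :=
  μ.map (f := graphMap φ) (measurable_graphMap hφ).aemeasurable

/-- Model-surjectivity of the factor map generated by `φ`, relative to `σ`. -/
def ModelSurjective [Countable G] (V : ℕ → Type*) [∀ n, Fintype (V n)] [∀ n, Nonempty (V n)]
    (σ : ∀ n, G → Equiv.Perm (V n))
    {X Y : Type*} [TopologicalSpace X] [MeasurableSpace X] [OpensMeasurableSpace X]
    [SecondCountableTopology X]
    [TopologicalSpace Y] [MeasurableSpace Y] [OpensMeasurableSpace Y] [SecondCountableTopology Y]
    (φ : (G → X) → Y) (hφ : Measurable φ)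
    (μ : ProbabilityMeasure (G → X)) (ν : ProbabilityMeasure (G → Y)) : Prop :=
  ∀ n : ℕ → ℕ, StrictMono n → ∀ y : (i : ℕ) → V (n i) → Y,
    Tendsto (fun i => empDist (σ (n i)) (y i)) atTop (𝓝 ν) →
    ∃ x : (i : ℕ) → V (n i) → X,
      Tendsto (fun i => empDist (σ (n i)) (fun v => (x i v, y i v))) atTop (𝓝 (graphJoin hφ μ))

end Defs

section Diagonal

/-- Convergence along `pathsAtTop ℓ` is convergence as `i → ∞`, uniformly in `j ≤ ℓ i`. -/
def pathsAtTop (ℓ : ℕ → ℕ) : Filter (ℕ × ℕ) :=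
  comap Prod.fst atTop ⊓ 𝓟 {ij | ij.2 ≤ ℓ ij.1}

theorem eventually_pathsAtTop {ℓ : ℕ → ℕ} {P : ℕ × ℕ → Prop} :
    (∀ᶠ ij in pathsAtTop ℓ, P ij) ↔ ∀ᶠ i in atTop, ∀ j ≤ ℓ i, P (i, j) := by
  simp only [pathsAtTop, eventually_inf_principal, eventually_comap, Set.mem_ofPred_eq]
  constructor <;> intro h <;> filter_upwards [h] with i hi
  · exact fun j hj => hi (i, j) rfl hj
  · rintro ⟨i, j⟩ rfl hj
    exact hi j hj

theorem tendsto_pathsAtTop_iff {α : Type*} {l : Filter α} {ℓ : ℕ → ℕ} {f : ℕ × ℕ → α} :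
    Tendsto f (pathsAtTop ℓ) l ↔ ∀ s ∈ l, ∀ᶠ i in atTop, ∀ j ≤ ℓ i, f (i, j) ∈ s :=
  forall₂_congr fun _ _ => eventually_pathsAtTop

theorem tendsto_pathsAtTop_succ {α : Type*} {l : Filter α} {ℓ : ℕ → ℕ} {f : ℕ × ℕ → α}
    (hf : Tendsto f (pathsAtTop ℓ) l) (hlast : Tendsto (fun i => f (i, ℓ i + 1)) atTop l) :
    Tendsto f (pathsAtTop fun i => ℓ i + 1) l := by
  refine tendsto_pathsAtTop_iff.2 fun s hs => ?_
  filter_upwards [tendsto_pathsAtTop_iff.1 hf s hs, hlast hs] with i hpath hend j hj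
  rcases Nat.le_succ_iff.1 hj with hj | rfl
  · exact hpath j hj
  · exact hend

theorem exists_monotone_tendsto_atTop_eventually {P : ℕ → ℕ → Prop}
    (h : ∀ k, ∀ᶠ i in atTop, P k i) :
    ∃ K : ℕ → ℕ, Monotone K ∧ Tendsto K atTop atTop ∧ ∀ᶠ i in atTop, P (K i) i := by
  classical
  choose N hN using fun k => eventually_atTop.1 (h k)
  -- `K i` is the largest level `k ≤ i` whose threshold `N k` has been passed by `i`.
  refine ⟨fun i => Nat.findGreatest (fun k => N k ≤ i) i,
    fun i i' hii' => Nat.findGreatest_mono (fun k hk => hk.trans hii') hii', ?_, ?_⟩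
  · exact tendsto_atTop.2 fun k => eventually_atTop.2 ⟨max k (N k), fun i hi =>
      Nat.le_findGreatest (le_of_max_le_left hi) (le_of_max_le_right hi)⟩
  · filter_upwards [eventually_ge_atTop (N 0)] with i hi
    exact hN _ i (Nat.findGreatest_spec (P := fun k => N k ≤ i) (Nat.zero_le i) hi)

theorem exists_diagonal_tendsto_pathsAtTop {Z : ℕ → Type*} [∀ l, TopologicalSpace (Z l)]
    [∀ l, FirstCountableTopology (Z l)] {ζ : ∀ l, Z l} {ℓ : ℕ → ℕ → ℕ}
    {R : ℕ → ∀ l, ℕ × ℕ → Z l} {P : ℕ → ℕ → Prop}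
    (hR : ∀ k, ∀ l ≤ k, Tendsto (R k l) (pathsAtTop (ℓ k)) (𝓝 (ζ l)))
    (hP : ∀ k, ∀ᶠ i in atTop, P k i) :
    ∃ K : ℕ → ℕ, Monotone K ∧ Tendsto K atTop atTop ∧ (∀ᶠ i in atTop, P (K i) i) ∧
      ∀ l, Tendsto (fun ij => R (K ij.1) l ij) (pathsAtTop fun i => ℓ (K i) i) (𝓝 (ζ l)) := by
  choose B hB using fun l => (𝓝 (ζ l)).exists_antitone_basis
  obtain ⟨K, hKmono, hKtop, hK⟩ := exists_monotone_tendsto_atTop_eventually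
    (P := fun k i => P k i ∧ ∀ l ∈ Set.Iic k, ∀ j ≤ ℓ k i, R k l (i, j) ∈ B l k) fun k =>
      (hP k).and <| (Set.finite_Iic k).eventually_all.2 fun l hlk =>
        tendsto_pathsAtTop_iff.1 (hR k l hlk) _ ((hB l).mem k)
  refine ⟨K, hKmono, hKtop, hK.mono fun i hi => hi.1, fun l => ?_⟩
  refine (hB l).tendsto_right_iff.2 fun m _ => eventually_pathsAtTop.2 ?_
  filter_upwards [hK, hKtop.eventually_ge_atTop (max l m)] with i hi hKi j hj
  exact (hB l).antitone (le_of_max_le_right hKi) (hi.2 l (le_of_max_le_left hKi) j hj)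

theorem exists_antitone_tendsto_zero_forall_lt {c : ℕ → ℝ} {B : ℝ} {ℓ : ℕ → ℕ}
    {b : ℕ → ℕ → ℝ} (hc : Antitone c) (hc_pos : ∀ i, 0 < c i)
    (hc_lim : Tendsto c atTop (𝓝 0)) (hB : ∀ i, ∀ j < ℓ i, b i j ≤ B)
    (hbc : ∀ᶠ i in atTop, ∀ j < ℓ i, b i j ≤ c i) :
    ∃ δ : ℕ → ℝ, Antitone δ ∧ (∀ i, 0 < δ i) ∧ Tendsto δ atTop (𝓝 0) ∧
      ∀ i, ∀ j < ℓ i, b i j < δ i := by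
  obtain ⟨N, hN⟩ := eventually_atTop.1 hbc
  have hB_abs := abs_nonneg B
  refine ⟨fun i => 2 * c i + if i < N then |B| else 0, fun i i' hii' => ?_, fun i => ?_, ?_,
    fun i j hj => ?_⟩
  · have := hc hii'
    dsimp only
    split_ifs <;> linarith
  · have := hc_pos i
    dsimp only
    split_ifs <;> linarith
  · have h2c : Tendsto (fun i => 2 * c i) atTop (𝓝 0) := by simpa using hc_lim.const_mul 2
    refine h2c.congr' ?_
    filter_upwards [eventually_ge_atTop N] with i hi
    simp [not_lt.2 hi]
  · have := hc_pos i
    dsimp only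
    split_ifs with hi
    · linarith [hB i j hj, le_abs_self B]
    · linarith [hN i (not_lt.1 hi) j hj]

end Diagonal

section Truncation

variable {X : ℕ → Type*}

def finTrunc (k : ℕ) (a : ∀ i, X i) : ∀ j : Fin k, X j := fun j => a j

def finRestrict {l k : ℕ} (hlk : l ≤ k) (z : ∀ j : Fin k, X j) : ∀ j : Fin l, X j :=
  fun j => z (Fin.castLE hlk j)

def finExtend (k : ℕ) (z : ∀ j : Fin k, X j) (a : ∀ i, X i) : ∀ i, X i :=
  fun i => if h : i < k then z ⟨i, h⟩ else a i

theorem finExtend_finTrunc_self (k : ℕ) (a : ∀ i, X i) : finExtend k (finTrunc k a) a = a := by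
  funext i
  by_cases h : i < k <;> simp [finExtend, finTrunc, h]

theorem finTrunc_finExtend {l k : ℕ} (hlk : l ≤ k) (z : ∀ j : Fin k, X j) (a : ∀ i, X i) :
    finTrunc l (finExtend k z a) = finRestrict hlk z := by
  funext j
  simp only [finTrunc, finExtend, finRestrict, lt_of_lt_of_le j.2 hlk, dite_true]
  rfl

variable [∀ i, TopologicalSpace (X i)]

theorem continuous_finTrunc (k : ℕ) : Continuous (finTrunc (X := X) k) :=
  continuous_pi fun _ => continuous_apply _

theorem continuous_finRestrict {l k : ℕ} (hlk : l ≤ k) :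
    Continuous (finRestrict (X := X) hlk) :=
  continuous_pi fun _ => continuous_apply _

theorem continuous_finExtend_left (k : ℕ) (a : ∀ i, X i) :
    Continuous fun z : ∀ j : Fin k, X j => finExtend k z a := by
  refine continuous_pi fun i => ?_
  by_cases h : i < k
  · simpa [finExtend, h] using continuous_apply (⟨i, h⟩ : Fin k)
  · simpa [finExtend, h] using continuous_const

end Truncation

noncomputable section WeightedDist

variable {X : ℕ → Type*} [∀ i, PseudoMetricSpace (X i)]

def weightedDist (a b : ∀ i, X i) : ℝ :=
  ∑' i, (1 / 2 : ℝ) ^ (i + 1) * dist (a i) (b i)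

def finWeightedDist (k : ℕ) (a b : ∀ j : Fin k, X j) : ℝ :=
  ∑ j : Fin k, (1 / 2 : ℝ) ^ ((j : ℕ) + 1) * dist (a j) (b j)

theorem weightedDist_finExtend (k : ℕ) (z z' : ∀ j : Fin k, X j) (a : ∀ i, X i) :
    weightedDist (finExtend k z a) (finExtend k z' a) = finWeightedDist k z z' := by
  rw [weightedDist, tsum_eq_sum (s := Finset.range k) fun i hi => by
    simp [finExtend, Finset.mem_range.not.1 hi]]
  rw [← Fin.sum_univ_eq_sum_range]
  simp [finWeightedDist, finExtend]

theorem weightedDist_le_of_eqOn (hdiam : ∀ i, ∀ a b : X i, dist a b ≤ 1) {k : ℕ}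
    {a b : ∀ i, X i} (hab : ∀ i < k, a i = b i) : weightedDist a b ≤ (1 / 2) ^ k := by
  have hle (i : ℕ) : (1 / 2 : ℝ) ^ (i + 1) * dist (a i) (b i) ≤
      2⁻¹ * if k ≤ i then (2⁻¹ : ℝ) ^ i else 0 := by
    split_ifs with hi
    · calc (1 / 2 : ℝ) ^ (i + 1) * dist (a i) (b i) ≤ (1 / 2) ^ (i + 1) * 1 :=
            mul_le_mul_of_nonneg_left (hdiam i _ _) (by positivity)
        _ = 2⁻¹ * 2⁻¹ ^ i := by ring
    · simp [hab i (not_le.1 hi)]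
  have hbound : Summable fun i : ℕ => 2⁻¹ * if k ≤ i then (2⁻¹ : ℝ) ^ i else 0 :=
    Summable.of_nonneg_of_le (fun i => by positivity)
      (fun i => by split_ifs <;> norm_num) summable_geometric_two
  calc weightedDist a b ≤ ∑' i : ℕ, 2⁻¹ * if k ≤ i then (2⁻¹ : ℝ) ^ i else 0 :=
        Summable.tsum_le_tsum hle
          (hbound.of_nonneg_of_le (fun i => by positivity) hle) hbound
    _ = (1 / 2) ^ k := by rw [tsum_mul_left, tsum_geometric_inv_two_ge]; simp

theorem hamming_le_of_forall_le {V Y : Type*} [Fintype V] [Nonempty V] {d : Y → Y → ℝ}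
    {x y : V → Y} {c : ℝ} (h : ∀ v, d (x v) (y v) ≤ c) : hamming d x y ≤ c := by
  rw [hamming, div_le_iff₀ (by exact_mod_cast Fintype.card_pos)]
  calc ∑ v, d (x v) (y v) ≤ ∑ _v : V, c := Finset.sum_le_sum fun v _ => h v
    _ = c * Fintype.card V := by rw [Finset.sum_const, Finset.card_univ, nsmul_eq_mul, mul_comm]

theorem hamming_weightedDist_le_one {V : Type*} [Fintype V] [Nonempty V]
    (hdiam : ∀ i, ∀ a b : X i, dist a b ≤ 1) (x y : V → ∀ i, X i) :
    hamming weightedDist x y ≤ 1 :=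
  hamming_le_of_forall_le fun _ =>
    (weightedDist_le_of_eqOn hdiam (k := 0) nofun).trans_eq (pow_zero _)

end WeightedDist

section Empirical

variable {G : Type*}

theorem measurable_comp_left {Y Z : Type*} [MeasurableSpace Y] [MeasurableSpace Z] {h : Y → Z}
    (hh : Measurable h) : Measurable (h ∘ · : (G → Y) → G → Z) :=
  measurable_pi_lambda _ fun g => hh.comp (measurable_pi_apply g)

theorem empDist_comp {V Y Z : Type*} [Fintype V] [Nonempty V] [MeasurableSpace Y]
    [MeasurableSpace Z] (σ : G → Equiv.Perm V) {h : Y → Z} (hh : Measurable h) (x : V → Y) :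
    empDist σ (h ∘ x) = (empDist σ x).map (measurable_comp_left hh).aemeasurable := by
  apply Subtype.ext
  change _ = Measure.map _ ((Fintype.card V : ℝ≥0∞)⁻¹ • ∑ v, Measure.dirac (pullbackName σ v x))
  rw [Measure.map_smul, Measure.map_finset_sum' (measurable_comp_left hh).aemeasurable]
  simp only [Measure.map_dirac' (measurable_comp_left hh)]
  rfl

theorem tendsto_empDist_comp [Countable G] {ι : Type*} {F : Filter ι} {V : ι → Type*}
    [∀ a, Fintype (V a)] [∀ a, Nonempty (V a)] {Y Z : Type*} [TopologicalSpace Y]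
    [MeasurableSpace Y] [BorelSpace Y] [SecondCountableTopology Y] [TopologicalSpace Z]
    [MeasurableSpace Z] [BorelSpace Z] [SecondCountableTopology Z]
    {σ : ∀ a, G → Equiv.Perm (V a)} {x : ∀ a, V a → Y} {μ : ProbabilityMeasure (G → Y)}
    (hx : Tendsto (fun a => empDist (σ a) (x a)) F (𝓝 μ)) {h : Y → Z} (hh : Continuous h) :
    Tendsto (fun a => empDist (σ a) (h ∘ x a)) F
      (𝓝 (μ.map (Pi.continuous_postcomp hh).measurable.aemeasurable)) :=
  (ProbabilityMeasure.tendsto_map_of_tendsto_of_continuous _ _ hx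
    (Pi.continuous_postcomp hh)).congr fun a => (empDist_comp (σ a) hh.measurable (x a)).symm

end Empirical

section Marginals

variable {G : Type*} [Countable G] {X : ℕ → Type*} [∀ i, MetricSpace (X i)]
  [∀ i, CompactSpace (X i)]

theorem exists_abs_sub_le_of_finTrunc_eq (f : BoundedContinuousFunction (G → ∀ i, X i) ℝ)
    {ε : ℝ} (hε : 0 < ε) :
    ∃ K, ∀ u w : G → ∀ i, X i, finTrunc K ∘ u = finTrunc K ∘ w → |f u - f w| ≤ ε := by
  by_contra! hcon
  choose u w hagree hfar using hcon
  obtain ⟨z, φ, hφ, hz⟩ := CompactSpace.tendsto_subseq fun K => (u K, w K)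
  have hu := (continuous_fst.tendsto z).comp hz
  have hw := (continuous_snd.tendsto z).comp hz
  have hzz : z.1 = z.2 := by
    funext g i
    have hcoord {q : ℕ → G → ∀ i, X i} {r : G → ∀ i, X i} (hq : Tendsto q atTop (𝓝 r)) :
        Tendsto (fun m => q m g i) atTop (𝓝 (r g i)) :=
      ((continuous_apply i).tendsto _).comp (((continuous_apply g).tendsto _).comp hq)
    refine tendsto_nhds_unique ((hcoord hu).congr' ?_) (hcoord hw)
    filter_upwards [eventually_gt_atTop i] with m hm
    exact congrFun (congrFun (hagree (φ m)) g) ⟨i, hm.trans_le hφ.le_apply⟩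
  have hlim : Tendsto (fun m => |f (u (φ m)) - f (w (φ m))|) atTop (𝓝 |f z.1 - f z.2|) :=
    (((f.continuous.tendsto z.1).comp hu).sub ((f.continuous.tendsto z.2).comp hw)).abs
  rw [hzz, sub_self, abs_zero] at hlim
  exact (ge_of_tendsto hlim (Eventually.of_forall fun m => (hfar (φ m)).le)).not_gt hε

variable [∀ i, MeasurableSpace (X i)] [∀ i, BorelSpace (X i)]

noncomputable def finMarginal (k : ℕ) (ν : ProbabilityMeasure (G → ∀ i, X i)) :
    ProbabilityMeasure (G → ∀ j : Fin k, X j) :=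
  ν.map (Pi.continuous_postcomp (continuous_finTrunc k)).measurable.aemeasurable

theorem finMarginal_empDist (k : ℕ) {V : Type*} [Fintype V] [Nonempty V]
    (σ : G → Equiv.Perm V) (x : V → ∀ i, X i) :
    finMarginal k (empDist σ x) = empDist σ (finTrunc k ∘ x) :=
  (empDist_comp σ (continuous_finTrunc k).measurable x).symm

theorem finMarginal_map_finRestrict {l k : ℕ} (hlk : l ≤ k)
    (ν : ProbabilityMeasure (G → ∀ i, X i)) :
    (finMarginal k ν).map
      (Pi.continuous_postcomp (continuous_finRestrict hlk)).measurable.aemeasurable =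
      finMarginal l ν := by
  apply Subtype.ext
  exact Measure.map_map (Pi.continuous_postcomp (continuous_finRestrict hlk)).measurable
    (Pi.continuous_postcomp (continuous_finTrunc k)).measurable

theorem abs_integral_sub_integral_finMarginal_le (f : BoundedContinuousFunction (G → ∀ i, X i) ℝ)
    (a : ∀ i, X i) {K : ℕ} {ε : ℝ}
    (hK : ∀ u w : G → ∀ i, X i, finTrunc K ∘ u = finTrunc K ∘ w → |f u - f w| ≤ ε)
    (ν : ProbabilityMeasure (G → ∀ i, X i)) :
    |∫ ω, f ω ∂ν - ∫ ω, f ((finExtend K · a) ∘ ω) ∂(finMarginal K ν)| ≤ ε := by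
  let fK := f.compContinuous ⟨_, Pi.continuous_postcomp (continuous_finExtend_left K a)⟩
  let fK' := fK.compContinuous ⟨_, Pi.continuous_postcomp (continuous_finTrunc (X := X) K)⟩
  have hmap : ∫ ω, fK ω ∂(finMarginal K ν) = ∫ ω, fK' ω ∂ν :=
    integral_map (Pi.continuous_postcomp (continuous_finTrunc K)).measurable.aemeasurable
      fK.continuous.aestronglyMeasurable
  have hclose (ω : G → ∀ i, X i) : ‖f ω - fK' ω‖ ≤ ε :=
    hK _ _ (funext fun g => (finTrunc_finExtend le_rfl _ _).symm)
  change |∫ ω, f ω ∂ν - ∫ ω, fK ω ∂(finMarginal K ν)| ≤ ε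
  rw [hmap, ← integral_sub (f.integrable _) (fK'.integrable _)]
  simpa using norm_integral_le_of_norm_le_const (μ := (ν : Measure _)) (Eventually.of_forall hclose)

theorem tendsto_of_forall_tendsto_finMarginal [Nonempty (∀ i, X i)] {ι : Type*} {F : Filter ι}
    {Q : ι → ProbabilityMeasure (G → ∀ i, X i)} {ν : ProbabilityMeasure (G → ∀ i, X i)}
    (h : ∀ K, Tendsto (fun b => finMarginal K (Q b)) F (𝓝 (finMarginal K ν))) :
    Tendsto Q F (𝓝 ν) := by
  refine ProbabilityMeasure.tendsto_iff_forall_integral_tendsto.2 fun f =>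
    Metric.tendsto_nhds.2 fun ε hε => ?_
  obtain ⟨K, hK⟩ := exists_abs_sub_le_of_finTrunc_eq f (by positivity : 0 < ε / 3)
  let a : ∀ i, X i := Classical.arbitrary _
  let fK := f.compContinuous ⟨_, Pi.continuous_postcomp (continuous_finExtend_left K a)⟩
  filter_upwards [Metric.tendsto_nhds.1
    (ProbabilityMeasure.tendsto_iff_forall_integral_tendsto.1 (h K) fK) (ε / 3) (by positivity)]
    with b hb
  have hQ := abs_integral_sub_integral_finMarginal_le f a hK (Q b)
  have hν := abs_integral_sub_integral_finMarginal_le f a hK ν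
  change |∫ ω, f ((finExtend K · a) ∘ ω) ∂(finMarginal K (Q b)) -
    ∫ ω, f ((finExtend K · a) ∘ ω) ∂(finMarginal K ν)| < ε / 3 at hb
  rw [abs_le] at hQ hν
  rw [abs_sub_lt_iff] at hb
  rw [Real.dist_eq, abs_sub_lt_iff]
  constructor <;> linarith [hb.1, hb.2, hQ.1, hQ.2, hν.1, hν.2]

end Marginals

section LiftPath

variable {X : ℕ → Type*} {V : Type*}

def liftPath (k ℓ : ℕ) (z : ℕ → V → ∀ j : Fin k, X j) (x y : V → ∀ i, X i) (j : ℕ) :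
    V → ∀ i, X i :=
  if j ≤ ℓ then fun v => finExtend k (z j v) (x v) else y

variable {k ℓ : ℕ} {z : ℕ → V → ∀ j : Fin k, X j} {x y : V → ∀ i, X i}

theorem liftPath_of_le {j : ℕ} (hj : j ≤ ℓ) :
    liftPath k ℓ z x y j = fun v => finExtend k (z j v) (x v) :=
  if_pos hj

theorem liftPath_zero (hz : z 0 = finTrunc k ∘ x) : liftPath k ℓ z x y 0 = x := by
  rw [liftPath_of_le (Nat.zero_le ℓ), hz]
  exact funext fun v => finExtend_finTrunc_self k (x v)

theorem liftPath_succ : liftPath k ℓ z x y (ℓ + 1) = y :=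
  if_neg (Nat.not_succ_le_self ℓ)

theorem finTrunc_comp_liftPath {l j : ℕ} (hlk : l ≤ k) (hj : j ≤ ℓ) :
    finTrunc l ∘ liftPath k ℓ z x y j = finRestrict hlk ∘ z j := by
  rw [liftPath_of_le hj]
  exact funext fun v => finTrunc_finExtend hlk _ _

theorem hamming_liftPath_le [Fintype V] [Nonempty V] [∀ i, PseudoMetricSpace (X i)]
    (hdiam : ∀ i, ∀ a b : X i, dist a b ≤ 1) (hz : z ℓ = finTrunc k ∘ y)
    (hstep : ∀ j < ℓ, hamming (finWeightedDist k) (z j) (z (j + 1)) ≤ (1 / 2) ^ k) :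
    ∀ j < ℓ + 1, hamming weightedDist (liftPath k ℓ z x y j) (liftPath k ℓ z x y (j + 1))
      ≤ (1 / 2) ^ k := by
  intro j hj
  rcases Nat.lt_succ_iff_lt_or_eq.1 hj with hj | rfl
  · rw [liftPath_of_le hj.le, liftPath_of_le hj]
    simpa only [hamming, weightedDist_finExtend] using hstep j hj
  · rw [liftPath_of_le le_rfl, liftPath_succ]
    refine hamming_le_of_forall_le fun v => weightedDist_le_of_eqOn hdiam fun i hi => ?_
    simp [finExtend, hi, hz, finTrunc]

theorem tendsto_empDist_finTrunc_liftPath {G : Type*} [Countable G] [∀ i, MetricSpace (X i)]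
    [∀ i, CompactSpace (X i)] [∀ i, MeasurableSpace (X i)] [∀ i, BorelSpace (X i)]
    {V : ℕ → Type*} [∀ i, Fintype (V i)] [∀ i, Nonempty (V i)] {σ : ∀ i, G → Equiv.Perm (V i)}
    {k l : ℕ} (hlk : l ≤ k) {ℓ : ℕ → ℕ} {z : ∀ i, ℕ → V i → ∀ j : Fin k, X j}
    {x y : ∀ i, V i → ∀ m, X m} {ν : ProbabilityMeasure (G → ∀ i, X i)}
    (hz : Tendsto (fun ij : ℕ × ℕ => empDist (σ ij.1) (z ij.1 ij.2)) (pathsAtTop ℓ)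
      (𝓝 (finMarginal k ν)))
    (hy : Tendsto (fun i => empDist (σ i) (y i)) atTop (𝓝 ν)) :
    Tendsto (fun ij : ℕ × ℕ => empDist (σ ij.1)
        (finTrunc l ∘ liftPath k (ℓ ij.1) (z ij.1) (x ij.1) (y ij.1) ij.2))
      (pathsAtTop fun i => ℓ i + 1) (𝓝 (finMarginal l ν)) := by
  refine tendsto_pathsAtTop_succ ?_ ?_
  · have hrestrict := tendsto_empDist_comp hz (continuous_finRestrict hlk)
    rw [finMarginal_map_finRestrict] at hrestrict
    refine hrestrict.congr' (eventually_pathsAtTop.2 (Eventually.of_forall fun i j hj => ?_))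
    dsimp only
    rw [finTrunc_comp_liftPath hlk hj]
  · refine (tendsto_empDist_comp hy (continuous_finTrunc l)).congr fun i => ?_
    rw [liftPath_succ]

end LiftPath

theorem inverseLimit_connectedModelSpaces_general {G : Type} [Countable G]
    (V : ℕ → Type) [∀ n, Fintype (V n)] [∀ n, Nonempty (V n)]
    (σ : ∀ n, G → Equiv.Perm (V n))
    (X : ℕ → Type) [∀ i, MetricSpace (X i)] [∀ i, CompactSpace (X i)]
    [∀ i, MeasurableSpace (X i)] [∀ i, BorelSpace (X i)]
    (hdiam : ∀ i, ∀ a b : X i, dist a b ≤ 1)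
    (lam : ProbabilityMeasure (G → ((i : ℕ) → X i)))
    (hconn : ∀ k : ℕ,
      ConnectedModelSpaces V σ ((j : Fin k) → X (j : ℕ))
        (fun a b => ∑ j : Fin k, (1 / 2 : ℝ) ^ ((j : ℕ) + 1) * dist (a j) (b j))
        (lam.map (f := fun w => fun g => fun j : Fin k => w g (j : ℕ))
          (Measurable.aemeasurable (measurable_pi_lambda _ fun g =>
            measurable_pi_lambda _ fun j =>
              (measurable_pi_apply (j : ℕ)).comp (measurable_pi_apply g))))) :
    ConnectedModelSpaces V σ ((i : ℕ) → X i)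
      (fun a b => ∑' i : ℕ, (1 / 2 : ℝ) ^ (i + 1) * dist (a i) (b i)) lam := by
  intro n hn x y hx hy
  have : Nonempty (∀ i, X i) := ⟨x 0 (Classical.arbitrary _)⟩
  choose δk ℓk z _ _ hδk_lim hz_start hz_end hz_step hz_near using fun k =>
    hconn k n hn _ _ (tendsto_empDist_comp hx (continuous_finTrunc k))
      (tendsto_empDist_comp hy (continuous_finTrunc k))
  let q k i := liftPath k (ℓk k i) (z k i) (x i) (y i)
  have hlevel (k l : ℕ) (hlk : l ≤ k) :
      Tendsto (fun ij : ℕ × ℕ => empDist (σ (n ij.1)) (finTrunc l ∘ q k ij.1 ij.2))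
        (pathsAtTop fun i => ℓk k i + 1) (𝓝 (finMarginal l lam)) :=
    tendsto_empDist_finTrunc_liftPath (V := fun i => V (n i)) (σ := fun i => σ (n i)) hlk
      (tendsto_pathsAtTop_iff.2 (hz_near k)) hy
  obtain ⟨K, hK_mono, hK_lim, hK_step, hK_near⟩ := exists_diagonal_tendsto_pathsAtTop hlevel
    (P := fun k i => δk k i < (1 / 2) ^ k)
    (fun k => (hδk_lim k).eventually (gt_mem_nhds (by positivity)))
  obtain ⟨δ, hδ_anti, hδ_pos, hδ_lim, hδ_step⟩ := exists_antitone_tendsto_zero_forall_lt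
    (c := fun i => (1 / 2 : ℝ) ^ K i) (ℓ := fun i => ℓk (K i) i + 1)
    (b := fun i j => hamming weightedDist (q (K i) i j) (q (K i) i (j + 1)))
    (fun _ _ h => pow_le_pow_of_le_one (by norm_num) (by norm_num) (hK_mono h))
    (fun _ => by positivity)
    ((tendsto_pow_atTop_nhds_zero_of_lt_one (by norm_num) (by norm_num)).comp hK_lim)
    (fun _ _ _ => hamming_weightedDist_le_one hdiam _ _)
    (hK_step.mono fun i hi => hamming_liftPath_le hdiam (hz_end _ i) fun j hj =>
      ((hz_step _ i j hj).trans hi).le)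
  refine ⟨δ, _, fun i => q (K i) i, hδ_anti, hδ_pos, hδ_lim, fun i => liftPath_zero (hz_start _ i),
    fun i => liftPath_succ, hδ_step,
    (tendsto_pathsAtTop_iff (f := fun ij => empDist (σ (n ij.1)) (q (K ij.1) ij.1 ij.2))).1 ?_⟩
  exact tendsto_of_forall_tendsto_finMarginal fun L =>
    (hK_near L).congr fun _ => (finMarginal_empDist _ _ _).symm

/-- **Theorem B.**  If every finite sub-joining of an infinite joining has connected model spaces
rel `Σ`, then so does the infinite joining (realizing inverse limits of `G`-systems). -/
theorem inverseLimit_connectedModelSpaces {G : Type} [Group G] [Countable G]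
    (V : ℕ → Type) [∀ n, Fintype (V n)] [∀ n, Nonempty (V n)]
    (σ : ∀ n, G → Equiv.Perm (V n)) (hsofic : IsSoficApprox V σ)
    (X : ℕ → Type) [∀ i, MetricSpace (X i)] [∀ i, CompactSpace (X i)]
    [∀ i, MeasurableSpace (X i)] [∀ i, BorelSpace (X i)]
    (hdiam : ∀ i, ∀ a b : X i, dist a b ≤ 1)
    (lam : ProbabilityMeasure (G → ((i : ℕ) → X i)))
    (hinv : ShiftInvariant lam.toMeasure)
    (μ : (i : ℕ) → ProbabilityMeasure (G → X i))
    (hjoin : ∀ i : ℕ,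
      lam.toMeasure.map (fun w => fun g => w g i) = (μ i).toMeasure)
    (hconn : ∀ k : ℕ,
      ConnectedModelSpaces V σ ((j : Fin k) → X (j : ℕ))
        (fun a b => ∑ j : Fin k, (1 / 2 : ℝ) ^ ((j : ℕ) + 1) * dist (a j) (b j))
        (lam.map (f := fun w => fun g => fun j : Fin k => w g (j : ℕ))
          (Measurable.aemeasurable (measurable_pi_lambda _ fun g =>
            measurable_pi_lambda _ fun j =>
              (measurable_pi_apply (j : ℕ)).comp (measurable_pi_apply g))))) :
    ConnectedModelSpaces V σ ((i : ℕ) → X i)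
      (fun a b => ∑' i : ℕ, (1 / 2 : ℝ) ^ (i + 1) * dist (a i) (b i)) lam :=
  inverseLimit_connectedModelSpaces_general V σ X hdiam lam hconn
end

section
/- Let G be a countable discrete group with a sofic approximation Σ and let (X^G, μ, S, d) be a metric G-process. Then the following are equivalent: (1) the process has connected model spaces rel Σ; (2) for every δ > 0 and every weak* neighbourhood O of μ, there is a weak* neighbourhood O' ⊆ O of μ such that the pair (Ω(O', σ_n), Ω(O, σ_n)) is relatively δ-connected according to d^{(V_n)} for all sufficiently large n. Moreover, both (1) and (2) are implied by: (3) for every δ > 0, μ has a base of weak* neighbourhoods N such that Ω(N, σ_n) is δ-connected according to d^{(V_n)} for all sufficiently large n. -/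
open MeasureTheory Filter Topology
open scoped ENNReal NNReal

/-- A `δ`-path from `x` to `y` staying inside `B`, with respect to the distance function `d`. -/
def DeltaPathIn {A : Type*} (d : A → A → ℝ) (δ : ℝ) (B : Set A) (x y : A) : Prop :=
  ∃ (ℓ : ℕ) (p : ℕ → A), p 0 = x ∧ p ℓ = y ∧ (∀ j ≤ ℓ, p j ∈ B) ∧
    ∀ j < ℓ, d (p j) (p (j + 1)) < δ

/-- A set is `δ`-connected if any two of its points are joined by a `δ`-path inside it. -/
def DeltaConnected {A : Type*} (d : A → A → ℝ) (δ : ℝ) (B : Set A) : Prop :=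
  ∀ x ∈ B, ∀ y ∈ B, DeltaPathIn d δ B x y

/-- A nested pair `(A₀, B)` is relatively `δ`-connected if any two points of `A₀` are joined by a
`δ`-path inside `B`. -/
def RelDeltaConnected {A : Type*} (d : A → A → ℝ) (δ : ℝ) (A₀ B : Set A) : Prop :=
  ∀ x ∈ A₀, ∀ y ∈ A₀, DeltaPathIn d δ B x y

/-!
(1) ⇒ (2): if (2) failed for some `δ` and `O`, a diagonal choice along a countable basis `B k` of
neighbourhoods of `μ` gives models `x k, y k` at times `n k` with empirical distributions in
`B k ∩ O` but no `δ`-path between them inside `Ω(O, σ (n k))`; the paths supplied by (1) are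
eventually `δ`-fine and inside `Ω(O)`, a contradiction.

(2) ⇒ (1): with `c` a strict bound on the distance, for each level `k`, (2) eventually joins
`x i` to `y i` by a `c / (k + 1)`-path through models of the first `k` basic neighbourhoods.
Letting the level `K i` tend to infinity slowly enough that level `K i` is already reached at
time `i` produces the required paths.
-/

theorem DeltaPathIn.mono {A : Type*} {d : A → A → ℝ} {δ : ℝ} {B B' : Set A} {x y : A}
    (h : DeltaPathIn d δ B x y) (hBB' : B ⊆ B') : DeltaPathIn d δ B' x y := by
  obtain ⟨ℓ, p, hp0, hpℓ, hpB, hpd⟩ := h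
  exact ⟨ℓ, p, hp0, hpℓ, fun j hj => hBB' (hpB j hj), hpd⟩

theorem deltaPathIn_of_lt {A : Type*} {d : A → A → ℝ} {δ : ℝ} {B : Set A} {x y : A}
    (hx : x ∈ B) (hy : y ∈ B) (hxy : d x y < δ) : DeltaPathIn d δ B x y :=
  ⟨1, fun j => if j = 0 then x else y, rfl, rfl,
    fun j _ => by dsimp only; split_ifs <;> assumption,
    fun j hj => by simpa [Nat.lt_one_iff.mp hj] using hxy⟩

theorem DeltaConnected.relDeltaConnected {A : Type*} {d : A → A → ℝ} {δ : ℝ} {A₀ B : Set A}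
    (h : DeltaConnected d δ A₀) (hA₀B : A₀ ⊆ B) : RelDeltaConnected d δ A₀ B :=
  fun x hx y hy => (h x hx y hy).mono hA₀B

theorem hamming_lt {V X : Type*} [Fintype V] [Nonempty V] {dX : X → X → ℝ} {C : ℝ}
    (hC : ∀ a b, dX a b < C) (x y : V → X) : hamming dX x y < C := by
  have hcard : (0 : ℝ) < Fintype.card V := by exact_mod_cast Fintype.card_pos
  rw [hamming, div_lt_iff₀ hcard]
  calc ∑ v, dX (x v) (y v) < ∑ _v : V, C :=
        Finset.sum_lt_sum_of_nonempty Finset.univ_nonempty fun v _ => hC _ _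
    _ = C * Fintype.card V := by simp [mul_comm]

theorem exists_monotone_tendsto_atTop_forall {P : ℕ → ℕ → Prop} (h0 : ∀ i, P 0 i)
    (h : ∀ k, ∀ᶠ i in atTop, P k i) :
    ∃ K : ℕ → ℕ, Monotone K ∧ Tendsto K atTop atTop ∧ ∀ i, P (K i) i := by
  classical
  choose T hT using fun k => eventually_atTop.mp (h k)
  set K : ℕ → ℕ := fun i => Nat.findGreatest (fun k => T k ≤ i) i
  refine ⟨K, fun i i' hii' => Nat.findGreatest_mono (fun k hk => hk.trans hii') hii', ?_,
    fun i => ?_⟩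
  · refine tendsto_atTop_atTop.mpr fun k => ⟨max k (T k), fun i hi => ?_⟩
    exact Nat.le_findGreatest (le_of_max_le_left hi) (le_of_max_le_right hi)
  · rcases eq_or_ne (K i) 0 with hK | hK
    · rw [hK]; exact h0 i
    · exact hT (K i) i (Nat.findGreatest_of_ne_zero (P := fun k => T k ≤ i) rfl hK)

section ModelSpaces

variable {G : Type*}

/-- The model space `Ω(O, σ)`. -/
def modelSpace {V X : Type*} [Fintype V] [Nonempty V] [MeasurableSpace X]
    (σ : G → Equiv.Perm V) (O : Set (ProbabilityMeasure (G → X))) : Set (V → X) :=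
  {x | empDist σ x ∈ O}

variable [Countable G] {V : ℕ → Type*} [∀ n, Fintype (V n)] [∀ n, Nonempty (V n)]
  {σ : ∀ n, G → Equiv.Perm (V n)}
  {X : Type*} [TopologicalSpace X] [MeasurableSpace X] [OpensMeasurableSpace X]
  [SecondCountableTopology X] {dX : X → X → ℝ}
  {μ : ProbabilityMeasure (G → X)} [(𝓝 μ).IsCountablyGenerated]

theorem ConnectedModelSpaces.exists_relDeltaConnected (h : ConnectedModelSpaces V σ X dX μ)
    {δ : ℝ} (hδ : 0 < δ) {O : Set (ProbabilityMeasure (G → X))} (hO : O ∈ 𝓝 μ) :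
    ∃ O' ∈ 𝓝 μ, O' ⊆ O ∧ ∀ᶠ n in atTop,
      RelDeltaConnected (hamming dX) δ (modelSpace (σ n) O') (modelSpace (σ n) O) := by
  obtain ⟨B, hB⟩ := (𝓝 μ).exists_antitone_basis
  by_contra! hfreq
  obtain ⟨n, hn, hfail⟩ := extraction_forall_of_frequently fun k =>
    hfreq (B k ∩ O) (inter_mem (hB.mem k) hO) Set.inter_subset_right
  simp only [RelDeltaConnected, not_forall] at hfail
  choose x hx y hy hxy using hfail
  obtain ⟨δ', ℓ, p, -, -, hδ', hp0, hpℓ, hpd, hpO⟩ :=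
    h n hn x y (hB.tendsto fun k => (hx k).1) (hB.tendsto fun k => (hy k).1)
  obtain ⟨i, hδ'i, hpi⟩ := ((hδ'.eventually_lt_const hδ).and (hpO O hO)).exists
  exact hxy i ⟨ℓ i, p i, hp0 i, hpℓ i, hpi, fun j hj => (hpd i j hj).trans hδ'i⟩

theorem connectedModelSpaces_of_relDeltaConnected (hbdd : ∃ C, ∀ a b, dX a b ≤ C)
    (h : ∀ δ : ℝ, 0 < δ → ∀ O ∈ 𝓝 μ, ∃ O' ∈ 𝓝 μ, O' ⊆ O ∧ ∀ᶠ n in atTop,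
      RelDeltaConnected (hamming dX) δ (modelSpace (σ n) O') (modelSpace (σ n) O)) :
    ConnectedModelSpaces V σ X dX μ := by
  intro n hn x y hx hy
  obtain ⟨C, hC⟩ := hbdd
  set c := max C 0 + 1
  have hc : 0 < c := by positivity
  have hdXc : ∀ a b, dX a b < c := fun a b => (hC a b).trans_lt (by grind)
  obtain ⟨B, hB⟩ := (𝓝 μ).exists_antitone_basis
  -- Level `k` asks for a `c / (k + 1)`-path through models of `B 0, …, B (k - 1)`; level `0` is
  -- then unconstrained, and boundedness of `dX` makes the one-step path serve it.
  set W : ℕ → Set (ProbabilityMeasure (G → X)) := fun k => ⋂ j < k, B j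
  have hW : ∀ k, W k ∈ 𝓝 μ := fun k =>
    (biInter_mem (Set.finite_lt_nat k)).mpr fun j _ => hB.mem j
  have level : ∀ k : ℕ, ∀ᶠ i in atTop, DeltaPathIn (hamming dX) (c / (k + 1))
      (modelSpace (σ (n i)) (W k)) (x i) (y i) := by
    intro k
    obtain ⟨O', hO', -, hrel⟩ := h (c / (k + 1)) (by positivity) (W k) (hW k)
    filter_upwards [hx.eventually_mem hO', hy.eventually_mem hO',
      hn.tendsto_atTop.eventually hrel] with i hxi hyi hreli
    exact hreli _ hxi _ hyi
  have level_zero : ∀ i, DeltaPathIn (hamming dX) (c / ((0 : ℕ) + 1))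
      (modelSpace (σ (n i)) (W 0)) (x i) (y i) := fun i =>
    deltaPathIn_of_lt (by simp [W, modelSpace]) (by simp [W, modelSpace])
      (by simpa using hamming_lt hdXc (x i) (y i))
  obtain ⟨K, hKmono, hKtop, hK⟩ := exists_monotone_tendsto_atTop_forall
    (P := fun (k : ℕ) i => DeltaPathIn (hamming dX) (c / (k + 1))
      (modelSpace (σ (n i)) (W k)) (x i) (y i)) level_zero level
  choose ℓ p hp0 hpℓ hpW hpd using hK
  refine ⟨fun i => c / (K i + 1), ℓ, p, fun i i' hii' => ?_, fun i => by positivity, ?_,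
    hp0, hpℓ, hpd, fun O hO => ?_⟩
  · change c / (K i' + 1 : ℝ) ≤ c / (K i + 1)
    gcongr
    exact hKmono hii'
  · simpa [Function.comp_def] using (tendsto_const_div_atTop_nhds_zero_nat c).comp
      ((tendsto_add_atTop_nat 1).comp hKtop)
  · obtain ⟨k, hk⟩ := hB.mem_iff.mp hO
    filter_upwards [hKtop.eventually_gt_atTop k] with i hi j hj
    exact hk (Set.mem_iInter₂.mp (hpW i j hj) k hi)

end ModelSpaces

theorem connectedModelSpaces_reform_general {G : Type} [Group G] [Countable G]
    (V : ℕ → Type) [∀ n, Fintype (V n)] [∀ n, Nonempty (V n)]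
    (σ : ∀ n, G → Equiv.Perm (V n))
    {X : Type} [MetricSpace X] [CompactSpace X] [MeasurableSpace X] [BorelSpace X]
    (μ : ProbabilityMeasure (G → X)) :
    (ConnectedModelSpaces V σ X dist μ ↔
      (∀ δ : ℝ, 0 < δ → ∀ O ∈ 𝓝 μ, ∃ O' ∈ 𝓝 μ, O' ⊆ O ∧
        ∀ᶠ n in atTop, RelDeltaConnected (hamming dist) δ
          {x : V n → X | empDist (σ n) x ∈ O'} {x : V n → X | empDist (σ n) x ∈ O})) ∧
    ((∀ δ : ℝ, 0 < δ → ∀ O ∈ 𝓝 μ, ∃ N ∈ 𝓝 μ, N ⊆ O ∧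
        ∀ᶠ n in atTop, DeltaConnected (hamming dist) δ {x : V n → X | empDist (σ n) x ∈ N}) →
      (ConnectedModelSpaces V σ X dist μ ∧
        (∀ δ : ℝ, 0 < δ → ∀ O ∈ 𝓝 μ, ∃ O' ∈ 𝓝 μ, O' ⊆ O ∧
          ∀ᶠ n in atTop, RelDeltaConnected (hamming dist) δ
            {x : V n → X | empDist (σ n) x ∈ O'} {x : V n → X | empDist (σ n) x ∈ O}))) := by
  have hbdd : ∃ C, ∀ a b : X, dist a b ≤ C :=
    ⟨_, fun a b => Metric.dist_le_diam_of_mem isCompact_univ.isBounded trivial trivial⟩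
  have h21 := connectedModelSpaces_of_relDeltaConnected (σ := σ) (μ := μ) hbdd
  refine ⟨⟨fun h1 δ hδ O hO => h1.exists_relDeltaConnected hδ hO, h21⟩, fun h3 => ?_⟩
  have h2 : ∀ δ : ℝ, 0 < δ → ∀ O ∈ 𝓝 μ, ∃ O' ∈ 𝓝 μ, O' ⊆ O ∧ ∀ᶠ n in atTop,
      RelDeltaConnected (hamming dist) δ (modelSpace (σ n) O') (modelSpace (σ n) O) := by
    intro δ hδ O hO
    obtain ⟨N, hN, hNO, hconn⟩ := h3 δ hδ O hO
    exact ⟨N, hN, hNO, hconn.mono fun n hn => hn.relDeltaConnected fun x hx => hNO hx⟩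
  exact ⟨h21 h2, h2⟩

/-- Reformulations of the property of having connected model spaces: (1) ↔ (2), and (3) implies
both. -/
theorem connectedModelSpaces_reform {G : Type} [Group G] [Countable G]
    (V : ℕ → Type) [∀ n, Fintype (V n)] [∀ n, Nonempty (V n)]
    (σ : ∀ n, G → Equiv.Perm (V n)) (hsofic : IsSoficApprox V σ)
    {X : Type} [MetricSpace X] [CompactSpace X] [MeasurableSpace X] [BorelSpace X]
    (μ : ProbabilityMeasure (G → X)) (hμ : ShiftInvariant μ.toMeasure) :
    (ConnectedModelSpaces V σ X dist μ ↔
      (∀ δ : ℝ, 0 < δ → ∀ O ∈ 𝓝 μ, ∃ O' ∈ 𝓝 μ, O' ⊆ O ∧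
        ∀ᶠ n in atTop, RelDeltaConnected (hamming dist) δ
          {x : V n → X | empDist (σ n) x ∈ O'} {x : V n → X | empDist (σ n) x ∈ O})) ∧
    ((∀ δ : ℝ, 0 < δ → ∀ O ∈ 𝓝 μ, ∃ N ∈ 𝓝 μ, N ⊆ O ∧
        ∀ᶠ n in atTop, DeltaConnected (hamming dist) δ {x : V n → X | empDist (σ n) x ∈ N}) →
      (ConnectedModelSpaces V σ X dist μ ∧
        (∀ δ : ℝ, 0 < δ → ∀ O ∈ 𝓝 μ, ∃ O' ∈ 𝓝 μ, O' ⊆ O ∧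
          ∀ᶠ n in atTop, RelDeltaConnected (hamming dist) δ
            {x : V n → X | empDist (σ n) x ∈ O'} {x : V n → X | empDist (σ n) x ∈ O}))) :=
  connectedModelSpaces_reform_general V σ μ
end

section
/- Let G be a countable discrete group with a sofic approximation Σ = (σ_n), and let (X, d) be a compact metric space. For any two sequences x_n, z_n ∈ X^{V_n}, the following are equivalent: (1) d^{(V_n)}(x_n, z_n) → 0; (2) every weak* subsequential limit of the empirical distributions P^{σ_n}_{(x_n, z_n)} ∈ Pr((X×X)^G) ≅ Pr(X^G × X^G) is supported on the diagonal {(x, x) : x ∈ X^G}. Moreover, if P^{σ_n}_{x_n} weak*-converges to some Borel probability μ on X^G, then either condition implies that P^{σ_n}_{z_n} weak*-converges to μ as well. -/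
open MeasureTheory Filter Topology
open scoped ENNReal NNReal

/-!
For a fixed `g`, the function `w ↦ dist (w g).1 (w g).2` is bounded and continuous on
`(X × X)^G`, and since `σ g` permutes `V` its integral against the joint empirical distribution
is exactly the Hamming distance. Hence along any subsequence on which the joint empirical
distributions converge to `λ`, the Hamming distances converge to `∫ dist (w g).1 (w g).2 dλ`,
and these integrals vanish for all `g` iff `λ` is carried by the diagonal. Compactness of the
space of probability measures on `(X × X)^G` supplies the convergent subsequences, and a joining
carried by the diagonal has equal marginals, which transfers the limit `μ` from `x` to `z`.
-/

open BoundedContinuousFunction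

section EmpiricalDistribution

variable {G V X : Type*} [Fintype V] [Nonempty V] [MeasurableSpace X]

lemma toMeasure_empDist (σ : G → Equiv.Perm V) (x : V → X) :
    (empDist σ x : Measure (G → X)) =
      (Fintype.card V : ℝ≥0∞)⁻¹ • ∑ v, Measure.dirac (pullbackName σ v x) :=
  rfl

lemma integral_empDist (σ : G → Equiv.Perm V) (x : V → X) {f : (G → X) → ℝ}
    (hf : StronglyMeasurable f) :
    ∫ w, f w ∂(empDist σ x : Measure (G → X)) =
      (∑ v, f (pullbackName σ v x)) / Fintype.card V := by
  rw [toMeasure_empDist, integral_smul_measure,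
    integral_finsetSum_measure fun v _ => integrable_dirac' hf enorm_lt_top]
  simp only [integral_dirac' _ _ hf, ENNReal.toReal_inv, ENNReal.toReal_natCast, smul_eq_mul,
    inv_mul_eq_div]

lemma empDist_map_comp {Y : Type*} [MeasurableSpace Y] {f : X → Y} (hf : Measurable f)
    (σ : G → Equiv.Perm V) (x : V → X) :
    (empDist σ x).map (f := fun w g => f (w g))
        (measurable_pi_lambda _ fun g => hf.comp (measurable_pi_apply g)).aemeasurable =
      empDist σ (f ∘ x) := by
  have hF : Measurable fun (w : G → X) g => f (w g) :=
    measurable_pi_lambda _ fun g => hf.comp (measurable_pi_apply g)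
  apply ProbabilityMeasure.toMeasure_injective
  rw [ProbabilityMeasure.toMeasure_map, toMeasure_empDist, toMeasure_empDist, Measure.map_smul,
    Measure.map_finset_sum' hF.aemeasurable]
  simp only [Measure.map_dirac' hF]
  rfl

lemma integral_dist_empDist_prod [PseudoMetricSpace X] [SecondCountableTopology X] [BorelSpace X]
    (σ : G → Equiv.Perm V) (x z : V → X) (g : G) :
    ∫ w, dist (w g).1 (w g).2 ∂(empDist σ (fun v => (x v, z v)) : Measure (G → X × X)) =
      hamming dist x z := by
  have hf : Measurable fun w : G → X × X => dist (w g).1 (w g).2 :=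
    measurable_dist.comp (measurable_pi_apply g)
  rw [integral_empDist σ _ hf.stronglyMeasurable, hamming]
  exact congrArg (· / _) (Equiv.sum_comp (σ g) fun v => dist (x v) (z v))

end EmpiricalDistribution

lemma isClosed_setOf_forall_fst_eq_snd {G X : Type*} [TopologicalSpace X] [T2Space X] :
    IsClosed {w : G → X × X | ∀ g, (w g).1 = (w g).2} := by
  simp only [Set.ofPred_forall]
  exact isClosed_iInter fun g => isClosed_eq (by fun_prop) (by fun_prop)

section Diagonal

variable {G X : Type*} [Countable G] [MetricSpace X] [CompactSpace X]
  [MeasurableSpace X] [BorelSpace X]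

lemma tendsto_hamming_of_tendsto_empDist {ι : Type*} {l : Filter ι} {V : ι → Type*}
    [∀ i, Fintype (V i)] [∀ i, Nonempty (V i)] {σ : ∀ i, G → Equiv.Perm (V i)}
    {x z : ∀ i, V i → X} {lam : ProbabilityMeasure (G → X × X)}
    (h : Tendsto (fun i => empDist (σ i) (fun v => (x i v, z i v))) l (𝓝 lam)) (g : G) :
    Tendsto (fun i => hamming dist (x i) (z i)) l
      (𝓝 (∫ w, dist (w g).1 (w g).2 ∂(lam : Measure (G → X × X)))) := by
  have := ProbabilityMeasure.tendsto_iff_forall_integral_tendsto.1 h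
    (mkOfCompact ⟨fun w : G → X × X => dist (w g).1 (w g).2, by fun_prop⟩)
  simpa only [mkOfCompact_apply, ContinuousMap.coe_mk, integral_dist_empDist_prod] using this

lemma measure_diagonal_eq_one_iff (lam : ProbabilityMeasure (G → X × X)) :
    lam.toMeasure {w | ∀ g, (w g).1 = (w g).2} = 1 ↔
      ∀ g, ∫ w, dist (w g).1 (w g).2 ∂(lam : Measure (G → X × X)) = 0 := by
  rw [← measure_univ (μ := lam.toMeasure),
    ← ae_iff_measure_eq isClosed_setOf_forall_fst_eq_snd.measurableSet.nullMeasurableSet,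
    ae_all_iff]
  refine forall_congr' fun g => ?_
  have hint : Integrable (fun w : G → X × X => dist (w g).1 (w g).2) lam :=
    (mkOfCompact ⟨fun w : G → X × X => dist (w g).1 (w g).2, by fun_prop⟩).integrable _
  rw [integral_eq_zero_iff_of_nonneg (fun w => dist_nonneg) hint]
  simp only [EventuallyEq, Pi.zero_apply, dist_eq_zero]

lemma measure_diagonal_eq_one_of_tendsto {ι : Type*} {l : Filter ι} [l.NeBot] {V : ι → Type*}
    [∀ i, Fintype (V i)] [∀ i, Nonempty (V i)] {σ : ∀ i, G → Equiv.Perm (V i)}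
    {x z : ∀ i, V i → X} {lam : ProbabilityMeasure (G → X × X)}
    (h0 : Tendsto (fun i => hamming dist (x i) (z i)) l (𝓝 0))
    (h : Tendsto (fun i => empDist (σ i) (fun v => (x i v, z i v))) l (𝓝 lam)) :
    lam.toMeasure {w | ∀ g, (w g).1 = (w g).2} = 1 :=
  (measure_diagonal_eq_one_iff lam).2 fun g =>
    tendsto_nhds_unique (tendsto_hamming_of_tendsto_empDist h g) h0

lemma fst_ae_eq_snd_of_measure_diagonal_eq_one {lam : ProbabilityMeasure (G → X × X)}
    (hlam : lam.toMeasure {w | ∀ g, (w g).1 = (w g).2} = 1) :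
    (fun w g => (w g).1) =ᵐ[(lam : Measure (G → X × X))] fun w g => (w g).2 := by
  have hae : ∀ᵐ w ∂(lam : Measure (G → X × X)), ∀ g, (w g).1 = (w g).2 :=
    (ae_iff_measure_eq isClosed_setOf_forall_fst_eq_snd.measurableSet.nullMeasurableSet).2
      (hlam.trans measure_univ.symm)
  filter_upwards [hae] with w hw using funext hw

lemma tendsto_empDist_of_tendsto_empDist_prod {ι : Type*} {l : Filter ι} [l.NeBot]
    {V : ι → Type*} [∀ i, Fintype (V i)] [∀ i, Nonempty (V i)]
    {σ : ∀ i, G → Equiv.Perm (V i)}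
    {x z : ∀ i, V i → X} {μ : ProbabilityMeasure (G → X)}
    {lam : ProbabilityMeasure (G → X × X)}
    (hx : Tendsto (fun i => empDist (σ i) (x i)) l (𝓝 μ))
    (h0 : Tendsto (fun i => hamming dist (x i) (z i)) l (𝓝 0))
    (h : Tendsto (fun i => empDist (σ i) (fun v => (x i v, z i v))) l (𝓝 lam)) :
    Tendsto (fun i => empDist (σ i) (z i)) l (𝓝 μ) := by
  have hfst := ProbabilityMeasure.tendsto_map_of_tendsto_of_continuous _ _ h
    (f := fun w g => (w g).1) (by fun_prop)
  have hsnd := ProbabilityMeasure.tendsto_map_of_tendsto_of_continuous _ _ h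
    (f := fun w g => (w g).2) (by fun_prop)
  simp only [empDist_map_comp measurable_fst, empDist_map_comp measurable_snd] at hfst hsnd
  have hmap : lam.map (f := fun w g => (w g).2) (Measurable.aemeasurable (by fun_prop)) = μ := by
    rw [← tendsto_nhds_unique hfst hx]
    apply ProbabilityMeasure.toMeasure_injective
    simp only [ProbabilityMeasure.toMeasure_map]
    exact Measure.map_congr (fst_ae_eq_snd_of_measure_diagonal_eq_one
      (measure_diagonal_eq_one_of_tendsto h0 h)).symm
  rwa [hmap] at hsnd

lemma tendsto_empDist_of_tendsto_hamming {ι : Type*} {l : Filter ι} [l.IsCountablyGenerated]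
    {V : ι → Type*} [∀ i, Fintype (V i)] [∀ i, Nonempty (V i)]
    {σ : ∀ i, G → Equiv.Perm (V i)}
    {x z : ∀ i, V i → X} {μ : ProbabilityMeasure (G → X)}
    (hx : Tendsto (fun i => empDist (σ i) (x i)) l (𝓝 μ))
    (h0 : Tendsto (fun i => hamming dist (x i) (z i)) l (𝓝 0)) :
    Tendsto (fun i => empDist (σ i) (z i)) l (𝓝 μ) := by
  refine tendsto_of_subseq_tendsto fun ns hns => ?_
  obtain ⟨lam, φ, hφ, hlam⟩ := CompactSpace.tendsto_subseq
    fun j => empDist (σ (ns j)) fun v => (x (ns j) v, z (ns j) v)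
  exact ⟨φ, tendsto_empDist_of_tendsto_empDist_prod ((hx.comp hns).comp hφ.tendsto_atTop)
    ((h0.comp hns).comp hφ.tendsto_atTop) hlam⟩

lemma tendsto_hamming_of_forall_measure_diagonal_eq_one [Nonempty G] {V : ℕ → Type*}
    [∀ n, Fintype (V n)] [∀ n, Nonempty (V n)] {σ : ∀ n, G → Equiv.Perm (V n)}
    {x z : ∀ n, V n → X}
    (H : ∀ (lam : ProbabilityMeasure (G → X × X)) (n : ℕ → ℕ), StrictMono n →
      Tendsto (fun j => empDist (σ (n j)) (fun v => (x (n j) v, z (n j) v))) atTop (𝓝 lam) →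
      lam.toMeasure {w | ∀ g, (w g).1 = (w g).2} = 1) :
    Tendsto (fun n => hamming dist (x n) (z n)) atTop (𝓝 0) := by
  refine tendsto_of_subseq_tendsto fun ns hns => ?_
  obtain ⟨ψ, -, hψ⟩ := strictMono_subseq_of_tendsto_atTop hns
  obtain ⟨lam, φ, hφ, hlam⟩ := CompactSpace.tendsto_subseq
    fun j => empDist (σ (ns (ψ j))) fun v => (x (ns (ψ j)) v, z (ns (ψ j)) v)
  have hdist := (measure_diagonal_eq_one_iff lam).1 (H lam _ (hψ.comp hφ) hlam)
  refine ⟨ψ ∘ φ, ?_⟩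
  simpa only [hdist, Function.comp_apply] using
    tendsto_hamming_of_tendsto_empDist hlam (Classical.arbitrary G)

end Diagonal

theorem hamming_tendsto_zero_iff_diagonal_general {G : Type} [Group G] [Countable G]
    (V : ℕ → Type) [∀ n, Fintype (V n)] [∀ n, Nonempty (V n)]
    (σ : ∀ n, G → Equiv.Perm (V n))
    {X : Type} [MetricSpace X] [CompactSpace X] [MeasurableSpace X] [BorelSpace X]
    (x z : (n : ℕ) → V n → X) :
    (Tendsto (fun n => hamming dist (x n) (z n)) atTop (𝓝 0) ↔
      ∀ (lam : ProbabilityMeasure (G → X × X)) (n : ℕ → ℕ), StrictMono n →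
        Tendsto (fun j => empDist (σ (n j)) (fun v => (x (n j) v, z (n j) v))) atTop (𝓝 lam) →
        lam.toMeasure {w : G → X × X | ∀ g : G, (w g).1 = (w g).2} = 1) ∧
    (∀ μ : ProbabilityMeasure (G → X),
      Tendsto (fun n => empDist (σ n) (x n)) atTop (𝓝 μ) →
      Tendsto (fun n => hamming dist (x n) (z n)) atTop (𝓝 0) →
      Tendsto (fun n => empDist (σ n) (z n)) atTop (𝓝 μ)) :=
  ⟨⟨fun h0 _ _ hn hlam => measure_diagonal_eq_one_of_tendsto (h0.comp hn.tendsto_atTop) hlam,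
      tendsto_hamming_of_forall_measure_diagonal_eq_one⟩,
    fun _ hx h0 => tendsto_empDist_of_tendsto_hamming hx h0⟩

/-- For sequences of models `x_n, z_n ∈ X^{V_n}`: the normalized Hamming distances tend to `0`
iff every weak* subsequential limit of the joint empirical distributions is supported on the
diagonal.  Moreover, if the empirical distributions of `x_n` converge to some `μ`, then either
condition implies that those of `z_n` converge to `μ` as well. -/
theorem hamming_tendsto_zero_iff_diagonal {G : Type} [Group G] [Countable G]
    (V : ℕ → Type) [∀ n, Fintype (V n)] [∀ n, Nonempty (V n)]
    (σ : ∀ n, G → Equiv.Perm (V n)) (hsofic : IsSoficApprox V σ)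
    {X : Type} [MetricSpace X] [CompactSpace X] [MeasurableSpace X] [BorelSpace X]
    (x z : (n : ℕ) → V n → X) :
    (Tendsto (fun n => hamming dist (x n) (z n)) atTop (𝓝 0) ↔
      ∀ (lam : ProbabilityMeasure (G → X × X)) (n : ℕ → ℕ), StrictMono n →
        Tendsto (fun j => empDist (σ (n j)) (fun v => (x (n j) v, z (n j) v))) atTop (𝓝 lam) →
        lam.toMeasure {w : G → X × X | ∀ g : G, (w g).1 = (w g).2} = 1) ∧
    (∀ μ : ProbabilityMeasure (G → X),
      Tendsto (fun n => empDist (σ n) (x n)) atTop (𝓝 μ) →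
      Tendsto (fun n => hamming dist (x n) (z n)) atTop (𝓝 0) →
      Tendsto (fun n => empDist (σ n) (z n)) atTop (𝓝 μ)) :=
  hamming_tendsto_zero_iff_diagonal_general V σ x z
end

section
/- Let G = ⟨S⟩ be generated by a finite symmetric set S, with relations R, and suppose G has Kazhdan's property (T); let r > 0 be as in the coboundary theorem for property-(T) groups. Let H ≤ G be a finite-index subgroup, Γ = (V, E) the Schreier graph on V = G/H, and K ≤ 𝕋 a closed subgroup. Then: (1) if α ∈ Z^1(Γ, K) satisfies d^{(V)}(α, B^1(Γ, K)) ≤ r, then α ∈ B^1(Γ, K); (2) given r' > 0, let ε > 0 and finite F ⊆ R be as in the near-cocycle theorem for (G, S, r'); if α ∈ Z^1_{ε,F}(Γ, K) satisfies d^{(V)}(α, B^1(Γ, K)) ≤ r, then in fact d^{(V)}(α, B^1(Γ, K)) < r'. -/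
open MeasureTheory Filter Topology
open scoped ENNReal

/-- Property (T) for the group `G` with respect to the finite generating set `S`: there is
`c > 0` such that any unitary representation with a `(S, c)`-invariant unit vector has a
nonzero invariant vector. -/
def HasPropertyT (G : Type*) [Group G] (S : Finset G) : Prop :=
  ∃ c : ℝ, 0 < c ∧
    ∀ (H : Type) (_ : NormedAddCommGroup H) (_ : InnerProductSpace ℂ H) (_ : CompleteSpace H),
      ∀ π : G →* (H ≃ₗᵢ[ℂ] H),
        (∃ v : H, ‖v‖ = 1 ∧ ∀ s ∈ S, ‖π s v - v‖ ≤ c) →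
        ∃ w : H, w ≠ 0 ∧ ∀ g : G, π g w = w

/-- A measure-preserving left action of `G` on `(X, μ)`. -/
def IsMPAction {G : Type*} [Group G] {X : Type*} [MeasurableSpace X]
    (T : G → X → X) (μ : Measure X) : Prop :=
  (∀ g, Measurable (T g)) ∧ (∀ g, Measure.map (T g) μ = μ) ∧
    T 1 = id ∧ ∀ g h, T (g * h) = T g ∘ T h

/-- Ergodicity: every strictly invariant measurable set is null or conull. -/
def IsErgodicAction {G : Type*} [Group G] {X : Type*} [MeasurableSpace X]
    (T : G → X → X) (μ : Measure X) : Prop :=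
  ∀ A : Set X, MeasurableSet A → (∀ g, T g ⁻¹' A = A) → μ A = 0 ∨ μ A = 1

/-- The sum `α(w, x)` of the cochain `α` along the word `w = s_ℓ ⋯ s_1` (the list is read with
its head the last letter applied): `α(w,x) = α(s_1,x) + α(s_2, T^{s_1}x) + ⋯`. -/
noncomputable def cocycleSum {G X : Type*} [Group G] (T : G → X → X)
    (α : G → X → UnitAddCircle) : List G → X → UnitAddCircle
  | [], _ => 0
  | s :: w, x => cocycleSum T α w x + α s (T w.prod x)

/-- `α` is a `K`-valued 1-cocycle over the system `(X, μ, T)` with respect to the generating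
set `S`: it is measurable, `K`-valued, and its 2-coboundary vanishes along every relation. -/
def IsCocycle {G : Type*} [Group G] {X : Type*} [MeasurableSpace X] (S : Finset G)
    (T : G → X → X) (μ : Measure X) (K : AddSubgroup UnitAddCircle)
    (α : G → X → UnitAddCircle) : Prop :=
  (∀ s ∈ S, Measurable (α s)) ∧ (∀ s ∈ S, ∀ x, α s x ∈ K) ∧
  ∀ w : List G, (∀ s ∈ w, s ∈ S) → w.prod = 1 → ∀ᵐ x ∂μ, cocycleSum T α w x = 0

/-- The sum of the cochain `α : E → 𝕋` around the based loop determined by the word `w` and the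
starting vertex `v` of the Schreier graph. -/
noncomputable def graphCocycleSum {G : Type*} [Group G] {H : Subgroup G}
    (α : G → G ⧸ H → UnitAddCircle) : List G → G ⧸ H → UnitAddCircle
  | [], _ => 0
  | s :: w, v => graphCocycleSum α w v + α s (w.prod • v)

/-- `α` is a `K`-valued 1-cocycle on the Schreier graph: it is `K`-valued on the edges and sums
to zero around every loop coming from a relation. -/
def IsGraphCocycle {G : Type*} [Group G] (S : Finset G) {H : Subgroup G}
    (K : AddSubgroup UnitAddCircle) (α : G → G ⧸ H → UnitAddCircle) : Prop :=
  (∀ s ∈ S, ∀ v, α s v ∈ K) ∧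
  ∀ w : List G, (∀ s ∈ w, s ∈ S) → w.prod = 1 → ∀ v, graphCocycleSum α w v = 0

/-- The set of `K`-valued 1-coboundaries on the Schreier graph. -/
def graphCoboundaries {G : Type*} [Group G] (S : Finset G) (H : Subgroup G)
    (K : AddSubgroup UnitAddCircle) : Set (G → G ⧸ H → UnitAddCircle) :=
  {γ | ∃ β : G ⧸ H → UnitAddCircle, (∀ v, β v ∈ K) ∧ ∀ s ∈ S, ∀ v, γ s v = β (s • v) - β v}

/-- The normalized Hamming distance `d^{(V)}` between two 1-cochains on the Schreier graph. -/
noncomputable def schreierDist {G : Type*} [Group G] (S : Finset G) {H : Subgroup G}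
    [Fintype (G ⧸ H)] (α γ : G → G ⧸ H → UnitAddCircle) : ℝ :=
  (∑ v : G ⧸ H, ∑ s ∈ S, ‖α s v - γ s v‖) / (Fintype.card (G ⧸ H) : ℝ)

/-- The distance from a 1-cochain to the subgroup of `K`-valued 1-coboundaries. -/
noncomputable def distToCoboundaries {G : Type*} [Group G] (S : Finset G) {H : Subgroup G}
    [Fintype (G ⧸ H)] (K : AddSubgroup UnitAddCircle)
    (α : G → G ⧸ H → UnitAddCircle) : ℝ :=
  sInf (schreierDist S α '' graphCoboundaries S H K)

/-! The finite transitive `G`-set `V = G ⧸ H` with its uniform probability measure is an ergodic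
measure-preserving `G`-system, on which integrating a function means averaging it over `V`. So
the Hamming distance `d^{(V)}` and the averaged loop sums of a cochain on the Schreier graph are
the `L¹` quantities of the same cochain over this system. Given `α`, subtract a coboundary
`dβ₀` nearest to it (one exists because `K` is compact): `α - dβ₀` has `S`-norm
`d^{(V)}(α, B¹) ≤ r` and is a cocycle, resp. near-cocycle, exactly when `α` is. The measurable
theorems then produce `β` with `α - dβ₀ - dβ` equal to zero, resp. of norm `< r'`. -/

open ProbabilityTheory

section FiniteSystems

variable {G X : Type*} [Group G] [MeasurableSpace X]

theorem isErgodicAction_of_forall_exists_apply_eq {T : G → X → X} (μ : Measure X)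
    [IsProbabilityMeasure μ] (hT : ∀ x y, ∃ g, T g x = y) : IsErgodicAction T μ := by
  intro A _ hA
  rcases A.eq_empty_or_nonempty with rfl | ⟨a, ha⟩
  · exact Or.inl measure_empty
  · refine Or.inr ?_
    have hA_univ : A = Set.univ := Set.eq_univ_of_forall fun x => by
      obtain ⟨g, rfl⟩ := hT x a
      rw [← hA g]
      exact ha
    rw [hA_univ, measure_univ]

variable [Fintype X] [MeasurableSingletonClass X]

theorem uniformOn_univ_singleton (x : X) :
    uniformOn (Set.univ : Set X) {x} = (Fintype.card X : ℝ≥0∞)⁻¹ := by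
  rw [uniformOn_univ, Measure.count_singleton, one_div]

theorem map_uniformOn_univ_of_bijective {f : X → X} (hf : Function.Bijective f) :
    (uniformOn (Set.univ : Set X)).map f = uniformOn Set.univ := by
  refine Measure.ext_of_singleton fun x => ?_
  obtain ⟨y, rfl⟩ := hf.2 x
  rw [Measure.map_apply (measurable_of_finite f) (measurableSet_singleton _),
    ← Set.image_singleton, hf.1.preimage_image, Set.image_singleton, uniformOn_univ_singleton,
    uniformOn_univ_singleton]

theorem integral_uniformOn_univ (f : X → ℝ) :
    ∫ x, f x ∂uniformOn Set.univ = (∑ x, f x) / Fintype.card X := by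
  rw [integral_fintype .of_finite]
  simp [Measure.real, uniformOn_univ_singleton, div_eq_inv_mul, Finset.mul_sum]

theorem ae_uniformOn_univ_iff {p : X → Prop} :
    (∀ᵐ x ∂uniformOn (Set.univ : Set X), p x) ↔ ∀ x, p x := by
  simp [ae_iff_of_countable, uniformOn_univ_singleton]

theorem isMPAction_uniformOn_univ {T : G → X → X} (h_one : T 1 = id)
    (h_mul : ∀ g h, T (g * h) = T g ∘ T h) : IsMPAction T (uniformOn Set.univ) := by
  have h_inv : ∀ g, Function.LeftInverse (T g⁻¹) (T g) := fun g x => by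
    rw [← Function.comp_apply (f := T g⁻¹), ← h_mul, inv_mul_cancel, h_one, id]
  refine ⟨fun g => measurable_of_finite _, fun g => map_uniformOn_univ_of_bijective ?_, h_one,
    h_mul⟩
  exact ⟨(h_inv g).injective, (inv_inv g ▸ h_inv g⁻¹).surjective⟩

end FiniteSystems

section TransferAction

variable {G X Y : Type*} [Group G] [MulAction G Y] (e : X ≃ Y)

def transferAction (g : G) (x : X) : X :=
  e.symm (g • e x)

@[simp]
theorem apply_transferAction (g : G) (x : X) : e (transferAction e g x) = g • e x :=
  e.apply_symm_apply _

variable [MeasurableSpace X]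

theorem isMPAction_transferAction [Fintype X] [MeasurableSingletonClass X] :
    IsMPAction (transferAction (G := G) e) (uniformOn Set.univ) :=
  isMPAction_uniformOn_univ (by ext; simp [transferAction])
    fun g h => by ext; simp [transferAction, mul_smul]

theorem isErgodicAction_transferAction [MulAction.IsPretransitive G Y] (μ : Measure X)
    [IsProbabilityMeasure μ] : IsErgodicAction (transferAction (G := G) e) μ :=
  isErgodicAction_of_forall_exists_apply_eq μ fun x y => by
    obtain ⟨g, hg⟩ := MulAction.exists_smul_eq G (e x) (e y)
    exact ⟨g, e.injective (by simp [hg])⟩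

end TransferAction

section SchreierGraph

variable {G : Type*} [Group G] {H : Subgroup G}

def graphCoboundary (β : G ⧸ H → UnitAddCircle) : G → G ⧸ H → UnitAddCircle :=
  fun s v => β (s • v) - β v

theorem graphCoboundary_add (β β' : G ⧸ H → UnitAddCircle) :
    graphCoboundary (β + β') = graphCoboundary β + graphCoboundary β' := by
  ext s v
  simp only [graphCoboundary, Pi.add_apply]
  abel

theorem graphCoboundary_mem_graphCoboundaries (S : Finset G) {K : AddSubgroup UnitAddCircle}
    {β : G ⧸ H → UnitAddCircle} (hβ : ∀ v, β v ∈ K) :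
    graphCoboundary β ∈ graphCoboundaries S H K :=
  ⟨β, hβ, fun _ _ _ => rfl⟩

theorem sub_graphCoboundary_mem {S : Finset G} {K : AddSubgroup UnitAddCircle}
    {α : G → G ⧸ H → UnitAddCircle} {β : G ⧸ H → UnitAddCircle} (hα : ∀ s ∈ S, ∀ v, α s v ∈ K)
    (hβ : ∀ v, β v ∈ K) : ∀ s ∈ S, ∀ v, (α - graphCoboundary β) s v ∈ K :=
  fun s hs v => K.sub_mem (hα s hs v) (K.sub_mem (hβ _) (hβ v))

theorem graphCocycleSum_sub (α γ : G → G ⧸ H → UnitAddCircle) (w : List G) (v : G ⧸ H) :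
    graphCocycleSum (α - γ) w v = graphCocycleSum α w v - graphCocycleSum γ w v := by
  induction w with
  | nil => simp [graphCocycleSum]
  | cons s w ih =>
    simp only [graphCocycleSum, ih, Pi.sub_apply]
    abel

theorem graphCocycleSum_graphCoboundary (β : G ⧸ H → UnitAddCircle) (w : List G) (v : G ⧸ H) :
    graphCocycleSum (graphCoboundary β) w v = β (w.prod • v) - β v := by
  induction w with
  | nil => simp [graphCocycleSum]
  | cons s w ih =>
    simp only [graphCocycleSum, ih, graphCoboundary, List.prod_cons, mul_smul]
    abel

theorem graphCocycleSum_sub_graphCoboundary (α : G → G ⧸ H → UnitAddCircle)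
    (β : G ⧸ H → UnitAddCircle) {w : List G} (hw : w.prod = 1) (v : G ⧸ H) :
    graphCocycleSum (α - graphCoboundary β) w v = graphCocycleSum α w v := by
  rw [graphCocycleSum_sub, graphCocycleSum_graphCoboundary, hw, one_smul, sub_self, sub_zero]

theorem cocycleSum_comp_of_equivariant {X : Type*} {T : G → X → X} {f : X → G ⧸ H}
    (hf : ∀ g x, f (T g x) = g • f x) (α : G → G ⧸ H → UnitAddCircle) (w : List G) (x : X) :
    cocycleSum T (fun s y => α s (f y)) w x = graphCocycleSum α w (f x) := by
  induction w with
  | nil => rfl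
  | cons s w ih => simp only [cocycleSum, graphCocycleSum, ih, hf]

theorem sub_graphCoboundary_add_comp_symm_apply {X : Type*} (e : X ≃ G ⧸ H)
    (α : G → G ⧸ H → UnitAddCircle) (β₀ : G ⧸ H → UnitAddCircle) (β : X → UnitAddCircle)
    (s : G) (x : X) :
    (α - graphCoboundary (β₀ + β ∘ e.symm)) s (e x)
      = (α - graphCoboundary β₀) s (e x) - (β (transferAction e s x) - β x) := by
  simp [graphCoboundary_add, graphCoboundary, transferAction, sub_sub]

theorem isCocycle_comp_sub_graphCoboundary {X : Type*} [Finite X] [MeasurableSpace X]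
    [MeasurableSingletonClass X] (e : X ≃ G ⧸ H) {S : Finset G} {K : AddSubgroup UnitAddCircle}
    {α : G → G ⧸ H → UnitAddCircle} (hα : IsGraphCocycle S K α) {β₀ : G ⧸ H → UnitAddCircle}
    (hβ₀ : ∀ v, β₀ v ∈ K) (μ : Measure X) :
    IsCocycle S (transferAction e) μ K fun s x => (α - graphCoboundary β₀) s (e x) := by
  refine ⟨fun s _ => measurable_of_finite _, fun s hs x => sub_graphCoboundary_mem hα.1 hβ₀ s hs _,
    fun w hw hw1 => .of_forall fun x => ?_⟩
  rw [cocycleSum_comp_of_equivariant (apply_transferAction e),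
    graphCocycleSum_sub_graphCoboundary _ _ hw1, hα.2 w hw hw1]

variable [Fintype (G ⧸ H)] (S : Finset G) {K : AddSubgroup UnitAddCircle}

theorem schreierDist_nonneg (α γ : G → G ⧸ H → UnitAddCircle) : 0 ≤ schreierDist S α γ := by
  unfold schreierDist
  positivity

theorem schreierDist_congr_right {α γ γ' : G → G ⧸ H → UnitAddCircle}
    (h : ∀ s ∈ S, ∀ v, γ s v = γ' s v) : schreierDist S α γ = schreierDist S α γ' := by
  unfold schreierDist
  congr 1
  exact Finset.sum_congr rfl fun v _ => Finset.sum_congr rfl fun s hs => by rw [h s hs v]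

theorem distToCoboundaries_le {α γ : G → G ⧸ H → UnitAddCircle}
    (hγ : γ ∈ graphCoboundaries S H K) : distToCoboundaries S K α ≤ schreierDist S α γ :=
  csInf_le ⟨0, by rintro _ ⟨γ', -, rfl⟩; exact schreierDist_nonneg S α γ'⟩ ⟨γ, hγ, rfl⟩

theorem schreierDist_eq_sum_integral {X : Type*} [Fintype X] [MeasurableSpace X]
    [MeasurableSingletonClass X] (e : X ≃ G ⧸ H) (α γ : G → G ⧸ H → UnitAddCircle) :
    schreierDist S α γ = ∑ s ∈ S, ∫ x, ‖(α - γ) s (e x)‖ ∂uniformOn Set.univ := by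
  simp only [schreierDist, integral_uniformOn_univ, Fintype.card_congr e, Pi.sub_apply]
  rw [Finset.sum_comm, Finset.sum_div]
  exact Finset.sum_congr rfl fun s _ => by rw [e.sum_comp fun v => ‖α s v - γ s v‖]

theorem integral_norm_cocycleSum_comp_sub_graphCoboundary {X : Type*} [Fintype X]
    [MeasurableSpace X] [MeasurableSingletonClass X] (e : X ≃ G ⧸ H) (α : G → G ⧸ H → UnitAddCircle)
    (β₀ : G ⧸ H → UnitAddCircle) {w : List G} (hw : w.prod = 1) :
    ∫ x, ‖cocycleSum (transferAction e) (fun s x => (α - graphCoboundary β₀) s (e x)) w x‖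
        ∂uniformOn Set.univ
      = (∑ v, ‖graphCocycleSum α w v‖) / Fintype.card (G ⧸ H) := by
  simp only [cocycleSum_comp_of_equivariant (apply_transferAction e),
    graphCocycleSum_sub_graphCoboundary _ _ hw, integral_uniformOn_univ,
    e.sum_comp fun v => ‖graphCocycleSum α w v‖, Fintype.card_congr e]

theorem exists_schreierDist_graphCoboundary_eq (hK : IsClosed (K : Set UnitAddCircle))
    (α : G → G ⧸ H → UnitAddCircle) :
    ∃ β : G ⧸ H → UnitAddCircle, (∀ v, β v ∈ K) ∧
      schreierDist S α (graphCoboundary β) = distToCoboundaries S K α := by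
  have hC : IsCompact {β : G ⧸ H → UnitAddCircle | ∀ v, β v ∈ (K : Set UnitAddCircle)} := by
    simpa only [Set.pi, Set.mem_univ, true_imp_iff] using
      isCompact_univ_pi fun _ : G ⧸ H => hK.isCompact
  have hcont : Continuous fun β : G ⧸ H → UnitAddCircle =>
      schreierDist S α (graphCoboundary β) := by
    unfold schreierDist graphCoboundary
    fun_prop
  obtain ⟨β₀, hβ₀K, hmin⟩ :=
    hC.exists_isMinOn (Set.nonempty_of_mem (x := 0) fun _ => K.zero_mem) hcont.continuousOn
  have hleast : IsLeast (schreierDist S α '' graphCoboundaries S H K)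
      (schreierDist S α (graphCoboundary β₀)) := by
    refine ⟨⟨_, graphCoboundary_mem_graphCoboundaries S hβ₀K, rfl⟩, ?_⟩
    rintro _ ⟨γ, ⟨β, hβK, hγ⟩, rfl⟩
    rw [schreierDist_congr_right S fun s hs v => hγ s hs v]
    exact hmin hβK
  exact ⟨β₀, hβ₀K, hleast.csInf_eq.symm⟩

end SchreierGraph

theorem schreier_coboundary_gap_general {G : Type*} [Group G] (S : Finset G)
    (r : ℝ)
    (hcob : ∀ (X : Type) (_ : MeasurableSpace X) (_ : StandardBorelSpace X) (μ : Measure X),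
      IsProbabilityMeasure μ →
      ∀ T : G → X → X, IsMPAction T μ → IsErgodicAction T μ →
        ∀ K : AddSubgroup UnitAddCircle, IsClosed (K : Set UnitAddCircle) →
          ∀ α : G → X → UnitAddCircle, IsCocycle S T μ K α →
            (∑ s ∈ S, ∫ x, ‖α s x‖ ∂μ) ≤ r →
            ∃ β : X → UnitAddCircle, Measurable β ∧ (∀ x, β x ∈ K) ∧
              ∀ s ∈ S, ∀ᵐ x ∂μ, α s x = β (T s x) - β x)
    (H : Subgroup G) [Fintype (G ⧸ H)]
    (K : AddSubgroup UnitAddCircle) (hK : IsClosed (K : Set UnitAddCircle)) :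
    ((∀ α : G → G ⧸ H → UnitAddCircle, IsGraphCocycle S K α →
        distToCoboundaries S K α ≤ r → α ∈ graphCoboundaries S H K) ∧
      ∀ r' : ℝ, 0 < r' → ∀ (ε : ℝ) (F : Finset (List G)), 0 < ε →
        (∀ w ∈ F, (∀ s ∈ w, s ∈ S) ∧ w.prod = 1) →
        (∀ (X : Type) (_ : MeasurableSpace X) (_ : StandardBorelSpace X) (μ : Measure X),
          IsProbabilityMeasure μ →
          ∀ T : G → X → X, IsMPAction T μ → IsErgodicAction T μ →
            ∀ K' : AddSubgroup UnitAddCircle, IsClosed (K' : Set UnitAddCircle) →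
              ∀ α : G → X → UnitAddCircle,
                (∀ s ∈ S, Measurable (α s)) → (∀ s ∈ S, ∀ x, α s x ∈ K') →
                (∀ w ∈ F, (∫ x, ‖cocycleSum T α w x‖ ∂μ) < ε) →
                (∑ s ∈ S, ∫ x, ‖α s x‖ ∂μ) ≤ r →
                ∃ β : X → UnitAddCircle, Measurable β ∧ (∀ x, β x ∈ K') ∧
                  (∑ s ∈ S, ∫ x, ‖α s x - (β (T s x) - β x)‖ ∂μ) < r') →
        ∀ α : G → G ⧸ H → UnitAddCircle,
          (∀ s ∈ S, ∀ v, α s v ∈ K) →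
          (∀ w ∈ F, (∀ s ∈ w, s ∈ S) → w.prod = 1 →
            (∑ v : G ⧸ H, ‖graphCocycleSum α w v‖) / (Fintype.card (G ⧸ H) : ℝ) < ε) →
          distToCoboundaries S K α ≤ r → distToCoboundaries S K α < r') := by
  -- The hypotheses only speak of systems in `Type`, so `G ⧸ H` is enumerated by `Fin`.
  set e := (Fintype.equivFin (G ⧸ H)).symm
  have : Nonempty (Fin (Fintype.card (G ⧸ H))) := e.nonempty
  have hMP := isMPAction_transferAction (G := G) e
  have hErg := isErgodicAction_transferAction (G := G) e (uniformOn Set.univ)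
  refine ⟨fun α hα hdist => ?_, fun r' _ ε F _ hF hnear α hαK hαnear hdist => ?_⟩
  · obtain ⟨β₀, hβ₀K, hβ₀⟩ := exists_schreierDist_graphCoboundary_eq S hK α
    obtain ⟨β, -, hβK, hβ⟩ := hcob _ _ inferInstance _ inferInstance _ hMP hErg K hK _
      (isCocycle_comp_sub_graphCoboundary e hα hβ₀K _)
      (by rwa [← schreierDist_eq_sum_integral, hβ₀])
    refine ⟨β₀ + β ∘ e.symm, fun v => K.add_mem (hβ₀K v) (hβK _), fun s hs v => ?_⟩
    have h := sub_graphCoboundary_add_comp_symm_apply e α β₀ β s (e.symm v)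
    rwa [ae_uniformOn_univ_iff.1 (hβ s hs), sub_self, e.apply_symm_apply, Pi.sub_apply,
      Pi.sub_apply, sub_eq_zero] at h
  · obtain ⟨β₀, hβ₀K, hβ₀⟩ := exists_schreierDist_graphCoboundary_eq S hK α
    obtain ⟨β, -, hβK, hβ⟩ := hnear _ _ inferInstance _ inferInstance _ hMP hErg K hK _
      (fun s _ => measurable_of_finite _) (fun s hs x => sub_graphCoboundary_mem hαK hβ₀K s hs _)
      (fun w hw => (integral_norm_cocycleSum_comp_sub_graphCoboundary e α β₀ (hF w hw).2).trans_lt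
        (hαnear w hw (hF w hw).1 (hF w hw).2))
      (by rwa [← schreierDist_eq_sum_integral, hβ₀])
    calc distToCoboundaries S K α
        ≤ schreierDist S α (graphCoboundary (β₀ + β ∘ e.symm)) :=
          distToCoboundaries_le S (graphCoboundary_mem_graphCoboundaries S
            fun v => K.add_mem (hβ₀K v) (hβK _))
      _ = _ := schreierDist_eq_sum_integral S e _ _
      _ < r' := by simpa only [sub_graphCoboundary_add_comp_symm_apply] using hβ

/-- Cocycles and near-cocycles on Schreier graphs of finite-index subgroups of a property-(T)
group: (1) a 1-cocycle at distance at most `r` from the coboundaries is itself a coboundary;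
(2) an `(ε, F)`-near-cocycle at distance at most `r` from the coboundaries is in fact at
distance less than `r'`. -/
theorem schreier_coboundary_gap {G : Type*} [Group G] (S : Finset G)
    (hsym : ∀ s ∈ S, s⁻¹ ∈ S) (hgen : Subgroup.closure (S : Set G) = ⊤)
    (hT : HasPropertyT G S)
    (r : ℝ) (hr : 0 < r)
    (hcob : ∀ (X : Type) (_ : MeasurableSpace X) (_ : StandardBorelSpace X) (μ : Measure X),
      IsProbabilityMeasure μ →
      ∀ T : G → X → X, IsMPAction T μ → IsErgodicAction T μ →
        ∀ K : AddSubgroup UnitAddCircle, IsClosed (K : Set UnitAddCircle) →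
          ∀ α : G → X → UnitAddCircle, IsCocycle S T μ K α →
            (∑ s ∈ S, ∫ x, ‖α s x‖ ∂μ) ≤ r →
            ∃ β : X → UnitAddCircle, Measurable β ∧ (∀ x, β x ∈ K) ∧
              ∀ s ∈ S, ∀ᵐ x ∂μ, α s x = β (T s x) - β x)
    (H : Subgroup G) (hHfin : H.FiniteIndex) [Fintype (G ⧸ H)]
    (K : AddSubgroup UnitAddCircle) (hK : IsClosed (K : Set UnitAddCircle)) :
    ((∀ α : G → G ⧸ H → UnitAddCircle, IsGraphCocycle S K α →
        distToCoboundaries S K α ≤ r → α ∈ graphCoboundaries S H K) ∧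
      ∀ r' : ℝ, 0 < r' → ∀ (ε : ℝ) (F : Finset (List G)), 0 < ε →
        (∀ w ∈ F, (∀ s ∈ w, s ∈ S) ∧ w.prod = 1) →
        (∀ (X : Type) (_ : MeasurableSpace X) (_ : StandardBorelSpace X) (μ : Measure X),
          IsProbabilityMeasure μ →
          ∀ T : G → X → X, IsMPAction T μ → IsErgodicAction T μ →
            ∀ K' : AddSubgroup UnitAddCircle, IsClosed (K' : Set UnitAddCircle) →
              ∀ α : G → X → UnitAddCircle,
                (∀ s ∈ S, Measurable (α s)) → (∀ s ∈ S, ∀ x, α s x ∈ K') →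
                (∀ w ∈ F, (∫ x, ‖cocycleSum T α w x‖ ∂μ) < ε) →
                (∑ s ∈ S, ∫ x, ‖α s x‖ ∂μ) ≤ r →
                ∃ β : X → UnitAddCircle, Measurable β ∧ (∀ x, β x ∈ K') ∧
                  (∑ s ∈ S, ∫ x, ‖α s x - (β (T s x) - β x)‖ ∂μ) < r') →
        ∀ α : G → G ⧸ H → UnitAddCircle,
          (∀ s ∈ S, ∀ v, α s v ∈ K) →
          (∀ w ∈ F, (∀ s ∈ w, s ∈ S) → w.prod = 1 →
            (∑ v : G ⧸ H, ‖graphCocycleSum α w v‖) / (Fintype.card (G ⧸ H) : ℝ) < ε) →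
          distToCoboundaries S K α ≤ r → distToCoboundaries S K α < r') :=
  schreier_coboundary_gap_general S r hcob H K hK
end
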